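/- arXiv:1508.00150 — 6 statements merged into one kernel-verified Lean document; each statement's English description precedes it below -/
import Mathlib

section
/- For σ ∈ Δ with σ nonempty, σ equals the intersection of all facets of Δ containing σ if and only if Lk_σ(Δ) is not a cone (i.e., there is no vertex contained in every facet of Lk_σ(Δ)). -/
/-- A simplicial complex on `[n]`: a collection of subsets of `[n]` closed under inclusion. -/
def IsSimplicialComplex {n : ℕ} (Δ : Set (Finset (Fin n))) : Prop :=
  ∀ σ ∈ Δ, ∀ τ ⊆ σ, τ ∈ Δ

/-- The link of `σ` in `Δ`. -/
def link {n : ℕ} (Δ : Set (Finset (Fin n))) (σ : Finset (Fin n)) : Set (Finset (Fin n)) :=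
  {ω | ω ∈ Δ ∧ Disjoint σ ω ∧ σ ∪ ω ∈ Δ}

/-- `ρ` is a facet of `Δ`: a face maximal under inclusion. -/
def IsFacet {n : ℕ} (Δ : Set (Finset (Fin n))) (ρ : Finset (Fin n)) : Prop :=
  ρ ∈ Δ ∧ ∀ τ ∈ Δ, ρ ⊆ τ → τ = ρ

/-- `f_σ`: the intersection of all facets of `Δ` containing `σ`, as a set of vertices. -/
def facetInt {n : ℕ} (Δ : Set (Finset (Fin n))) (σ : Finset (Fin n)) : Set (Fin n) :=
  {i | ∀ ρ, IsFacet Δ ρ → σ ⊆ ρ → i ∈ ρ}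

/-! The facets of `Lk_σ(Δ)` are exactly the sets `ρ \ σ` for the facets `ρ ⊇ σ` of `Δ`. Hence a
vertex `v ∉ σ` lies in `f_σ` exactly when it lies in every facet of the link, i.e. when it is a
cone point of the link; and a cone point of the link is never in `σ`, since the link has a facet
(it contains `∅`) and that facet is disjoint from `σ`. So `f_σ = σ` iff the link has no cone point. -/

section Facets

variable {n : ℕ} {Δ : Set (Finset (Fin n))} {σ τ ρ : Finset (Fin n)}

lemma exists_isFacet_superset (hτ : τ ∈ Δ) : ∃ ρ, IsFacet Δ ρ ∧ τ ⊆ ρ := by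
  obtain ⟨ρ, hτρ, hρ⟩ := (Set.toFinite Δ).exists_le_maximal hτ
  exact ⟨ρ, ⟨hρ.prop, fun _ hτ' hρτ' => hρ.eq_of_ge hτ' hρτ'⟩, hτρ⟩

lemma subset_facetInt : (σ : Set (Fin n)) ⊆ facetInt Δ σ :=
  fun _ hv _ _ hσρ => hσρ hv

lemma sdiff_mem_link (hΔ : IsSimplicialComplex Δ) (hρ : ρ ∈ Δ) (hσρ : σ ⊆ ρ) :
    ρ \ σ ∈ link Δ σ :=
  ⟨hΔ ρ hρ _ Finset.sdiff_subset, Finset.disjoint_sdiff, by rwa [Finset.union_sdiff_of_subset hσρ]⟩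

lemma IsFacet.sdiff_link (hΔ : IsSimplicialComplex Δ) (hρ : IsFacet Δ ρ) (hσρ : σ ⊆ ρ) :
    IsFacet (link Δ σ) (ρ \ σ) := by
  refine ⟨sdiff_mem_link hΔ hρ.1 hσρ, fun τ ⟨_, hστ, hστΔ⟩ hρτ => ?_⟩
  have hρ_eq : σ ∪ τ = ρ := hρ.2 _ hστΔ <| by
    simpa [Finset.union_sdiff_of_subset hσρ] using Finset.union_subset_union_right (s := σ) hρτ
  rw [← hρ_eq, Finset.union_sdiff_left, hστ.sdiff_eq_right]

lemma IsFacet.union_of_link (hΔ : IsSimplicialComplex Δ) (hτ : IsFacet (link Δ σ) τ) :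
    IsFacet Δ (σ ∪ τ) := by
  obtain ⟨⟨_, hστ, hστΔ⟩, hτmax⟩ := hτ
  refine ⟨hστΔ, fun ρ hρ hστρ => ?_⟩
  have hσρ : σ ⊆ ρ := Finset.subset_union_left.trans hστρ
  have hτρ : τ ⊆ ρ \ σ :=
    Finset.subset_sdiff.2 ⟨Finset.subset_union_right.trans hστρ, hστ.symm⟩
  rw [← Finset.union_sdiff_of_subset hσρ, hτmax _ (sdiff_mem_link hΔ hρ hσρ) hτρ]

lemma exists_isFacet_link (hΔ : IsSimplicialComplex Δ) (hσ : σ ∈ Δ) :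
    ∃ τ, IsFacet (link Δ σ) τ := by
  have hempty : ∅ ∈ link Δ σ :=
    ⟨hΔ σ hσ ∅ (Finset.empty_subset _), Finset.disjoint_empty_right _, by simpa using hσ⟩
  obtain ⟨τ, hτ, -⟩ := exists_isFacet_superset hempty
  exact ⟨τ, hτ⟩

lemma notMem_of_forall_isFacet_link (hΔ : IsSimplicialComplex Δ) (hσ : σ ∈ Δ) {v : Fin n}
    (hv : ∀ τ, IsFacet (link Δ σ) τ → v ∈ τ) : v ∉ σ := by
  obtain ⟨τ, hτ⟩ := exists_isFacet_link hΔ hσ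
  exact Finset.disjoint_right.1 hτ.1.2.1 (hv τ hτ)

lemma mem_facetInt_iff_forall_isFacet_link (hΔ : IsSimplicialComplex Δ) {v : Fin n} (hv : v ∉ σ) :
    v ∈ facetInt Δ σ ↔ ∀ τ, IsFacet (link Δ σ) τ → v ∈ τ := by
  refine ⟨fun hvf τ hτ => ?_, fun hv' ρ hρ hσρ => ?_⟩
  · have hvστ := hvf _ (hτ.union_of_link hΔ) Finset.subset_union_left
    exact (Finset.mem_union.1 hvστ).resolve_left hv
  · exact Finset.sdiff_subset (hv' _ (hρ.sdiff_link hΔ hσρ))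

end Facets

theorem stmt2_general {n : ℕ} (Δ : Set (Finset (Fin n))) (hΔ : IsSimplicialComplex Δ)
    (σ : Finset (Fin n)) (hσ : σ ∈ Δ) :
    (↑σ = facetInt Δ σ) ↔ ¬ ∃ v : Fin n, ∀ ρ, IsFacet (link Δ σ) ρ → v ∈ ρ := by
  constructor
  · rintro hσ_eq ⟨v, hv⟩
    have hvσ := notMem_of_forall_isFacet_link hΔ hσ hv
    have hvf := (mem_facetInt_iff_forall_isFacet_link hΔ hvσ).2 hv
    rw [← hσ_eq, Finset.mem_coe] at hvf
    exact hvσ hvf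
  · intro hno_cone
    refine subset_facetInt.antisymm fun v hv => ?_
    by_contra hvσ
    exact hno_cone ⟨v, (mem_facetInt_iff_forall_isFacet_link hΔ hvσ).1 hv⟩

theorem stmt2 {n : ℕ} (Δ : Set (Finset (Fin n))) (hΔ : IsSimplicialComplex Δ)
    (σ : Finset (Fin n)) (hσ : σ ∈ Δ) (hne : σ.Nonempty) :
    (↑σ = facetInt Δ σ) ↔ ¬ ∃ v : Fin n, ∀ ρ, IsFacet (link Δ σ) ρ → v ∈ ρ :=
  stmt2_general Δ hΔ σ hσ
end

section
/- Let Δ be a finite simplicial complex. Every face ω ∈ Lk_σ(Δ) (for σ = τ₁ ∩ τ₂ with τ₁, τ₂ distinct facets and σ contained in no other facet) is a subset of τ₁ ∖ σ or of τ₂ ∖ σ, and conversely every subset of τ₁ ∖ σ and every subset of τ₂ ∖ σ is in Lk_σ(Δ). -/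
/-- Every face is contained in a facet. -/
lemma exists_facet {n : ℕ} (Δ : Set (Finset (Fin n))) (τ : Finset (Fin n)) (hτ : τ ∈ Δ) :
    ∃ ρ, IsFacet Δ ρ ∧ τ ⊆ ρ := by
  have hfin : ({ρ ∈ Δ | τ ⊆ ρ} : Set (Finset (Fin n))).Finite := Set.toFinite _
  obtain ⟨ρ, hρ, hmax⟩ := Set.Finite.exists_maximalFor Finset.card _ hfin ⟨τ, hτ, Finset.Subset.refl τ⟩
  refine ⟨ρ, ⟨hρ.1, fun τ' hτ' hsub => ?_⟩, hρ.2⟩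
  have := le_antisymm (Finset.card_le_card hsub) (hmax ⟨hτ', hρ.2.trans hsub⟩ (Finset.card_le_card hsub))
  exact (Finset.eq_of_subset_of_card_le hsub (le_of_eq this.symm)).symm

theorem stmt5 {n : ℕ} (Δ : Set (Finset (Fin n))) (hΔ : IsSimplicialComplex Δ)
    (τ₁ τ₂ : Finset (Fin n)) (h1 : IsFacet Δ τ₁) (h2 : IsFacet Δ τ₂) (hne : τ₁ ≠ τ₂)
    (σ : Finset (Fin n)) (hσ : σ = τ₁ ∩ τ₂)
    (honly : ∀ ρ, IsFacet Δ ρ → σ ⊆ ρ → ρ = τ₁ ∨ ρ = τ₂) :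
    (∀ ω ∈ link Δ σ, ω ⊆ τ₁ \ σ ∨ ω ⊆ τ₂ \ σ) ∧
      (∀ ω ⊆ τ₁ \ σ, ω ∈ link Δ σ) ∧ (∀ ω ⊆ τ₂ \ σ, ω ∈ link Δ σ) := by
  have hστ₁ : σ ⊆ τ₁ := hσ ▸ Finset.inter_subset_left
  have hστ₂ : σ ⊆ τ₂ := hσ ▸ Finset.inter_subset_right
  refine ⟨?_, ?_, ?_⟩
  · rintro ω ⟨hωΔ, hdisj, hun⟩
    obtain ⟨ρ, hρ, hsub⟩ := exists_facet Δ _ hun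
    have hσρ : σ ⊆ ρ := (Finset.subset_union_left).trans hsub
    have hωρ : ω ⊆ ρ := (Finset.subset_union_right).trans hsub
    rcases honly ρ hρ hσρ with h | h
    · exact Or.inl (fun x hx => Finset.mem_sdiff.mpr
        ⟨h ▸ hωρ hx, fun hxσ => (Finset.disjoint_left.mp hdisj hxσ) hx⟩)
    · exact Or.inr (fun x hx => Finset.mem_sdiff.mpr
        ⟨h ▸ hωρ hx, fun hxσ => (Finset.disjoint_left.mp hdisj hxσ) hx⟩)
  · intro ω hω
    have hωτ : ω ⊆ τ₁ := hω.trans (Finset.sdiff_subset)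
    refine ⟨hΔ τ₁ h1.1 ω hωτ, ?_, hΔ τ₁ h1.1 _ (Finset.union_subset hστ₁ hωτ)⟩
    exact Finset.disjoint_left.mpr fun x hxσ hxω => (Finset.mem_sdiff.mp (hω hxω)).2 hxσ
  · intro ω hω
    have hωτ : ω ⊆ τ₂ := hω.trans (Finset.sdiff_subset)
    refine ⟨hΔ τ₂ h2.1 ω hωτ, ?_, hΔ τ₂ h2.1 _ (Finset.union_subset hστ₂ hωτ)⟩
    exact Finset.disjoint_left.mpr fun x hxσ hxω => (Finset.mem_sdiff.mp (hω hxω)).2 hxσ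
end

section
/- Let U₁,…,Uₙ be open sets in a topological space with code C = C(U) = {σ ⊆ [n] : U_σ ∖ ⋃_{j∉σ} U_j ≠ ∅}, where U_σ = ⋂_{i∈σ} U_i. If there exist σ ⊆ [n] and distinct i, j ∉ σ such that U_σ ≠ ∅, U_σ ∩ U_i ≠ ∅, U_σ ∩ U_j ≠ ∅, U_σ ⊆ U_i ∪ U_j, and U_σ ∩ U_i ∩ U_j = ∅, then U_σ is disconnected. In particular, the U_k cannot all be convex open subsets of ℝ^d. -/
theorem not_isPreconnected_of_subset_union_of_inter_eq_empty {X : Type*} [TopologicalSpace X]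
    {s u v : Set X} (hu : IsOpen u) (hv : IsOpen v) (hsuv : s ⊆ u ∪ v)
    (hsu : (s ∩ u).Nonempty) (hsv : (s ∩ v).Nonempty) (hdisj : s ∩ u ∩ v = ∅) :
    ¬ IsPreconnected s := by
  intro hs
  obtain ⟨x, hxs, hxu, hxv⟩ := hs u v hu hv hsuv hsu hsv
  exact hdisj.subset ⟨⟨hxs, hxu⟩, hxv⟩

theorem stmt8_general {n d : ℕ} (U : Fin n → Set (Fin d → ℝ)) (hopen : ∀ k, IsOpen (U k))
    (σ : Finset (Fin n)) (i j : Fin n)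
    (hne : (⋂ k ∈ σ, U k).Nonempty)
    (hUi : ((⋂ k ∈ σ, U k) ∩ U i).Nonempty)
    (hUj : ((⋂ k ∈ σ, U k) ∩ U j).Nonempty)
    (hcov : (⋂ k ∈ σ, U k) ⊆ U i ∪ U j)
    (hdisj : (⋂ k ∈ σ, U k) ∩ U i ∩ U j = ∅) :
    ¬ IsConnected (⋂ k ∈ σ, U k) ∧ ¬ (∀ k, Convex ℝ (U k)) := by
  have hdisconn : ¬ IsConnected (⋂ k ∈ σ, U k) := fun h =>
    not_isPreconnected_of_subset_union_of_inter_eq_empty (hopen i) (hopen j) hcov hUi hUj hdisj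
      h.isPreconnected
  refine ⟨hdisconn, fun hconv => hdisconn ?_⟩
  exact (convex_iInter₂ fun k _ => hconv k).isConnected hne

theorem stmt8 {n d : ℕ} (U : Fin n → Set (Fin d → ℝ)) (hopen : ∀ k, IsOpen (U k))
    (σ : Finset (Fin n)) (i j : Fin n) (hij : i ≠ j) (hi : i ∉ σ) (hj : j ∉ σ)
    (hne : (⋂ k ∈ σ, U k).Nonempty)
    (hUi : ((⋂ k ∈ σ, U k) ∩ U i).Nonempty)
    (hUj : ((⋂ k ∈ σ, U k) ∩ U j).Nonempty)
    (hcov : (⋂ k ∈ σ, U k) ⊆ U i ∪ U j)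
    (hdisj : (⋂ k ∈ σ, U k) ∩ U i ∩ U j = ∅) :
    ¬ IsConnected (⋂ k ∈ σ, U k) ∧ ¬ (∀ k, Convex ℝ (U k)) :=
  stmt8_general U hopen σ i j hne hUi hUj hcov hdisj
end

section
/- Let C ⊆ powerset([n]) be a code with a unique maximal codeword (under inclusion). Then C is convex with minimal embedding dimension at most 2: there exist convex open sets U₁,…,Uₙ ⊆ ℝ² such that C = C(U) ∪ {∅}, where C(U) = {σ ⊆ [n] : (⋂_{i∈σ}U_i) ∖ ⋃_{j∉σ}U_j ≠ ∅} with ⋂ over ∅ interpreted as ℝ². -/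
/-!
Give the codewords distinct positions `t_σ` on the real line, pairwise at distance at least `1`,
and look at the parabola `y = -x²`. For `i` in the maximal codeword `m`, let `U i` be the region
`y + x² < 1/4` cut down by the half-planes below the tangents at `x = t_σ`, one for each codeword
`σ ∌ i`. The point `(t_σ, 1/8 - t_σ²)` lies above the tangent at `t_σ` and below all the others,
so it realizes `σ`. Conversely, no point of the region `y + x² < 1/4` lies above two of the
tangents, so a point of some `U i` realizes either the unique codeword whose tangent it lies above,
or `m`.
-/

/-- The code of a collection of sets `U₁, …, Uₙ` in a space `X`:
`σ ∈ C(U)` iff `U_σ ∖ ⋃_{j ∉ σ} U_j ≠ ∅`, where `U_σ = ⋂_{i ∈ σ} U_i`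
(with `U_∅` the whole space). -/
def codeOf {n : ℕ} {X : Type*} (U : Fin n → Set X) : Set (Finset (Fin n)) :=
  {σ | ((⋂ i ∈ σ, U i) \ ⋃ j ∈ (σᶜ : Finset (Fin n)), U j).Nonempty}

open Set

lemma mem_codeOf_iff {n : ℕ} {X : Type*} {U : Fin n → Set X} {σ : Finset (Fin n)} :
    σ ∈ codeOf U ↔ ∃ p, ∀ i, p ∈ U i ↔ i ∈ σ := by
  refine exists_congr fun p => ?_
  simp only [mem_sdiff, mem_iInter₂, mem_iUnion₂, Finset.mem_compl, not_exists]
  constructor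
  · rintro ⟨hin, hout⟩ i
    exact ⟨fun hp => by_contra fun hi => hout i hi hp, hin i⟩
  · intro h
    exact ⟨fun i hi => (h i).2 hi, fun j hj hp => hj ((h j).1 hp)⟩

lemma Set.Finite.exists_isGreatest_of_existsUnique_maximal {α : Type*} [PartialOrder α]
    {s : Set α} (hs : s.Finite) (huniq : ∃! m, m ∈ s ∧ ∀ c ∈ s, m ≤ c → c = m) :
    ∃ m, IsGreatest s m := by
  obtain ⟨m, hm, -⟩ := id huniq
  refine ⟨m, hm.1, fun c hc => ?_⟩
  obtain ⟨d, hcd, hd⟩ := hs.exists_le_maximal hc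
  obtain rfl : d = m :=
    huniq.unique ⟨hd.prop, fun e he hde => (hd.eq_of_le he hde).symm⟩ hm
  exact hcd

lemma exists_pairwise_one_le_abs_sub (α : Type*) [Countable α] :
    ∃ t : α → ℝ, Pairwise fun a b => 1 ≤ |t a - t b| := by
  obtain ⟨f, hf⟩ := Countable.exists_injective_nat α
  refine ⟨fun a => f a, fun a b hab => ?_⟩
  have h : (1 : ℤ) ≤ |(f a : ℤ) - f b| :=
    Int.one_le_abs (sub_ne_zero.2 (by exact_mod_cast hf.ne hab))
  show 1 ≤ |(f a : ℝ) - f b|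
  exact_mod_cast h

namespace Parabola

/-- The open half-plane below the tangent line to the parabola `y = -x²` at `x = t`. -/
def belowTangent (t : ℝ) : Set (Fin 2 → ℝ) := {p | p 1 + 2 * t * p 0 < t ^ 2}

def cap : Set (Fin 2 → ℝ) := {p | p 1 + p 0 ^ 2 < 1 / 4}

noncomputable def point (t : ℝ) : Fin 2 → ℝ := ![t, 1 / 8 - t ^ 2]

lemma mem_belowTangent_iff {t : ℝ} {p : Fin 2 → ℝ} :
    p ∈ belowTangent t ↔ p 1 + p 0 ^ 2 < (p 0 - t) ^ 2 := by
  simp only [belowTangent, mem_ofPred_eq]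
  constructor <;> intro h <;> nlinarith

lemma isOpen_belowTangent (t : ℝ) : IsOpen (belowTangent t) :=
  isOpen_lt (by fun_prop) continuous_const

lemma convex_belowTangent (t : ℝ) : Convex ℝ (belowTangent t) := by
  refine convex_halfSpace_lt ⟨fun p q => ?_, fun c p => ?_⟩ (t ^ 2)
  · simp only [Pi.add_apply]; ring
  · simp only [Pi.smul_apply, smul_eq_mul]; ring

lemma isOpen_cap : IsOpen cap := isOpen_lt (by fun_prop) continuous_const

lemma convex_cap : Convex ℝ cap := by
  have h1 : ConvexOn ℝ univ fun p : Fin 2 → ℝ => p 1 := (LinearMap.proj 1).convexOn convex_univ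
  have h2 : ConvexOn ℝ univ fun p : Fin 2 → ℝ => p 0 ^ 2 :=
    (Even.convexOn_pow (𝕜 := ℝ) even_two).comp_linearMap
      (LinearMap.proj (R := ℝ) (φ := fun _ : Fin 2 => ℝ) 0)
  simpa [cap] using (h1.add h2).convex_lt (1 / 4)

lemma notMem_cap_of_notMem_belowTangent {s t : ℝ} (hst : 1 ≤ |s - t|) {p : Fin 2 → ℝ}
    (hs : p ∉ belowTangent s) (ht : p ∉ belowTangent t) : p ∉ cap := by
  rw [mem_belowTangent_iff, not_lt] at hs ht
  simp only [cap, mem_ofPred_eq, not_lt]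
  have : 1 ≤ (s - t) ^ 2 := by nlinarith [sq_abs (s - t)]
  nlinarith [sq_nonneg (2 * p 0 - s - t)]

lemma point_mem_cap (t : ℝ) : point t ∈ cap := by
  simp [point, cap]; norm_num

lemma point_notMem_belowTangent (t : ℝ) : point t ∉ belowTangent t := by
  simp [point, mem_belowTangent_iff]

end Parabola

open Parabola

section Realization

variable {n : ℕ} (C : Set (Finset (Fin n))) (m : Finset (Fin n)) (t : Finset (Fin n) → ℝ)

def parabolaRealization (i : Fin n) : Set (Fin 2 → ℝ) :=
  if i ∈ m then cap ∩ ⋂ σ ∈ {σ ∈ C | i ∉ σ}, belowTangent (t σ) else ∅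

lemma isOpen_parabolaRealization (i : Fin n) : IsOpen (parabolaRealization C m t i) := by
  unfold parabolaRealization
  split_ifs
  · exact isOpen_cap.inter <| (toFinite _).isOpen_biInter fun σ _ => isOpen_belowTangent (t σ)
  · exact isOpen_empty

lemma convex_parabolaRealization (i : Fin n) : Convex ℝ (parabolaRealization C m t i) := by
  unfold parabolaRealization
  split_ifs
  · exact convex_cap.inter <| convex_iInter₂ fun σ _ => convex_belowTangent (t σ)
  · exact convex_empty

variable {C m t}

lemma mem_parabolaRealization {i : Fin n} {p : Fin 2 → ℝ} :
    p ∈ parabolaRealization C m t i ↔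
      i ∈ m ∧ p ∈ cap ∧ ∀ σ ∈ C, i ∉ σ → p ∈ belowTangent (t σ) := by
  unfold parabolaRealization
  split_ifs with hi <;> simp [hi]

lemma mem_parabolaRealization_iff_of_forall_mem_belowTangent {p : Fin 2 → ℝ} (hp : p ∈ cap)
    (hbelow : ∀ τ ∈ C, p ∈ belowTangent (t τ)) (i : Fin n) :
    p ∈ parabolaRealization C m t i ↔ i ∈ m := by
  rw [mem_parabolaRealization]
  exact ⟨And.left, fun hi => ⟨hi, hp, fun τ hτ _ => hbelow τ hτ⟩⟩

variable (ht : Pairwise fun σ τ => 1 ≤ |t σ - t τ|) (hsub : ∀ c ∈ C, c ⊆ m)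
include ht hsub

lemma mem_parabolaRealization_iff_of_notMem_belowTangent {τ : Finset (Fin n)} (hτ : τ ∈ C)
    {p : Fin 2 → ℝ} (hp : p ∈ cap) (hpτ : p ∉ belowTangent (t τ)) (i : Fin n) :
    p ∈ parabolaRealization C m t i ↔ i ∈ τ := by
  rw [mem_parabolaRealization]
  refine ⟨fun ⟨_, _, hbelow⟩ => by_contra fun hi => hpτ (hbelow τ hτ hi), fun hi => ?_⟩
  refine ⟨hsub τ hτ hi, hp, fun σ hσ hiσ => by_contra fun hpσ => ?_⟩
  have hστ : σ ≠ τ := by rintro rfl; exact hiσ hi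
  exact notMem_cap_of_notMem_belowTangent (ht hστ) hpσ hpτ hp

lemma subset_codeOf_parabolaRealization : C ⊆ codeOf (parabolaRealization C m t) := fun c hc =>
  mem_codeOf_iff.2 ⟨point (t c), mem_parabolaRealization_iff_of_notMem_belowTangent ht hsub hc
    (point_mem_cap _) (point_notMem_belowTangent _)⟩

lemma codeOf_parabolaRealization_subset (hm : m ∈ C) :
    codeOf (parabolaRealization C m t) ⊆ insert ∅ C := by
  intro σ hσ
  obtain ⟨p, hp⟩ := mem_codeOf_iff.1 hσ
  obtain rfl | ⟨i, hi⟩ := σ.eq_empty_or_nonempty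
  · exact mem_insert _ _
  have hcap : p ∈ cap := (mem_parabolaRealization.1 ((hp i).2 hi)).2.1
  refine mem_insert_of_mem _ ?_
  by_cases hbelow : ∀ τ ∈ C, p ∈ belowTangent (t τ)
  · convert hm
    ext j
    rw [← hp, mem_parabolaRealization_iff_of_forall_mem_belowTangent hcap hbelow]
  · push Not at hbelow
    obtain ⟨τ, hτ, hpτ⟩ := hbelow
    convert hτ
    ext j
    rw [← hp, mem_parabolaRealization_iff_of_notMem_belowTangent ht hsub hτ hcap hpτ]

end Realization

theorem stmt10 {n : ℕ} (C : Set (Finset (Fin n))) (hempty : ∅ ∈ C)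
    (huniq : ∃! m, m ∈ C ∧ ∀ c ∈ C, m ⊆ c → c = m) :
    ∃ U : Fin n → Set (Fin 2 → ℝ),
      (∀ i, IsOpen (U i)) ∧ (∀ i, Convex ℝ (U i)) ∧ C = codeOf U ∪ {∅} := by
  obtain ⟨m, hm, hsub⟩ := (toFinite C).exists_isGreatest_of_existsUnique_maximal huniq
  obtain ⟨t, ht⟩ := exists_pairwise_one_le_abs_sub (Finset (Fin n))
  refine ⟨parabolaRealization C m t, isOpen_parabolaRealization C m t,
    convex_parabolaRealization C m t, ?_⟩
  have hcode := codeOf_parabolaRealization_subset ht hsub hm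
  rw [insert_eq_of_mem hempty] at hcode
  exact subset_antisymm (fun c hc => Or.inl (subset_codeOf_parabolaRealization ht hsub hc))
    (union_subset hcode (singleton_subset_iff.2 hempty))
end

section
/- Let Δ be a simplicial complex on [n], σ, τ disjoint subsets with σ ∈ Δ, and v ∈ [n] ∖ (σ ∪ τ). If both Lk_σ(Δ|_{σ∪τ∪{v}}) and Lk_{σ∪{v}}(Δ|_{σ∪τ∪{v}}) are contractible (where the latter is taken to be trivially satisfied if σ ∪ {v} ∉ Δ), then Lk_σ(Δ|_{σ∪τ}) is contractible. -/
/-- The restriction of `Δ` to the vertex set `S`. -/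
def restrict {n : ℕ} (Δ : Set (Finset (Fin n))) (S : Finset (Fin n)) : Set (Finset (Fin n)) :=
  {ω | ω ∈ Δ ∧ ω ⊆ S}

/-- The geometric realization of `Δ`, as a subset of `ℝⁿ`: the union over the faces `σ ∈ Δ`
of the geometric simplices spanned by the standard basis vectors indexed by `σ`. -/
def realization {n : ℕ} (Δ : Set (Finset (Fin n))) : Set (Fin n → ℝ) :=
  {x | ∃ σ ∈ Δ, (∀ i, 0 ≤ x i) ∧ (∀ i, x i ≠ 0 → i ∈ σ) ∧ (∑ i, x i) = 1}

section Comb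

variable {n : ℕ} {Δ : Set (Finset (Fin n))} {σ τ : Finset (Fin n)} {v : Fin n}

lemma realization_mono {G G' : Set (Finset (Fin n))} (h : G ⊆ G') :
    realization G ⊆ realization G' := by
  rintro x ⟨ω, hω, h1, h2, h3⟩
  exact ⟨ω, h hω, h1, h2, h3⟩

lemma L4 : link (restrict Δ (σ ∪ τ)) σ ⊆ link (restrict Δ (insert v (σ ∪ τ))) σ := by
  rintro ω ⟨⟨hωΔ, hωs⟩, hd, ⟨hsΔ, hss⟩⟩
  exact ⟨⟨hωΔ, hωs.trans (Finset.subset_insert _ _)⟩, hd,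
    ⟨hsΔ, hss.trans (Finset.subset_insert _ _)⟩⟩

lemma L1 (hΔ : IsSimplicialComplex Δ) (ω : Finset (Fin n))
    (hω : ω ∈ link (restrict Δ (insert v (σ ∪ τ))) σ) :
    ω.erase v ∈ link (restrict Δ (σ ∪ τ)) σ := by
  obtain ⟨⟨hωΔ, hωs⟩, hd, ⟨hsΔ, hss⟩⟩ := hω
  have hes : ω.erase v ⊆ σ ∪ τ := by
    intro i hi
    rw [Finset.mem_erase] at hi
    rcases Finset.mem_insert.1 (hωs hi.2) with h | h
    · exact absurd h hi.1
    · exact h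
  refine ⟨⟨hΔ ω hωΔ _ (Finset.erase_subset _ _), hes⟩,
    hd.mono_right (Finset.erase_subset _ _), ⟨?_, ?_⟩⟩
  · exact hΔ _ hsΔ _ (Finset.union_subset_union_right (Finset.erase_subset _ _))
  · exact Finset.union_subset Finset.subset_union_left hes

lemma L2 (hΔ : IsSimplicialComplex Δ) (ω : Finset (Fin n))
    (hω : ω ∈ link (restrict Δ (insert v (σ ∪ τ))) σ) (hvω : v ∈ ω) :
    ω.erase v ∈ link (restrict Δ (insert v (σ ∪ τ))) (insert v σ) := by
  obtain ⟨⟨hωΔ, hωs⟩, hd, ⟨hsΔ, hss⟩⟩ := hω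
  have key : insert v σ ∪ ω.erase v = σ ∪ ω := by
    ext a
    by_cases hav : a = v <;>
      simp only [Finset.mem_union, Finset.mem_insert, Finset.mem_erase, hav] <;> tauto
  refine ⟨⟨hΔ ω hωΔ _ (Finset.erase_subset _ _), (Finset.erase_subset _ _).trans hωs⟩, ?_, ?_⟩
  · rw [Finset.disjoint_left]
    intro a ha haω
    rw [Finset.mem_erase] at haω
    rcases Finset.mem_insert.1 ha with rfl | ha
    · exact haω.1 rfl
    · exact (Finset.disjoint_left.1 hd ha) haω.2
  · rw [key]; exact ⟨hsΔ, hss⟩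

lemma L3 (hΔ : IsSimplicialComplex Δ) : link (restrict Δ (insert v (σ ∪ τ))) (insert v σ) ⊆
    link (restrict Δ (σ ∪ τ)) σ := by
  rintro ω ⟨⟨hωΔ, hωs⟩, hd, ⟨hsΔ, hss⟩⟩
  have hvω : v ∉ ω := Finset.disjoint_left.1 hd (Finset.mem_insert_self _ _)
  have hωst : ω ⊆ σ ∪ τ := by
    intro i hi
    rcases Finset.mem_insert.1 (hωs hi) with rfl | h
    · exact absurd hi hvω
    · exact h
  have hd' : Disjoint σ ω := hd.mono_left (Finset.subset_insert _ _)
  refine ⟨⟨hωΔ, hωst⟩, hd', ⟨?_, Finset.union_subset Finset.subset_union_left hωst⟩⟩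
  exact hΔ _ hsΔ _ (Finset.union_subset_union_left (Finset.subset_insert _ _))

lemma L5 (hΔ : IsSimplicialComplex Δ) (hins : insert v σ ∉ Δ) :
    link (restrict Δ (insert v (σ ∪ τ))) σ = link (restrict Δ (σ ∪ τ)) σ := by
  apply Set.Subset.antisymm _ L4
  rintro ω ⟨⟨hωΔ, hωs⟩, hd, ⟨hsΔ, hss⟩⟩
  have hvω : v ∉ ω := by
    intro hvω
    exact hins (hΔ _ hsΔ _ (Finset.insert_subset (Finset.mem_union_right _ hvω)
      Finset.subset_union_left))
  have hωst : ω ⊆ σ ∪ τ := by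
    intro i hi
    rcases Finset.mem_insert.1 (hωs hi) with rfl | h
    · exact absurd hi hvω
    · exact h
  exact ⟨⟨hωΔ, hωst⟩, hd, ⟨hsΔ, Finset.union_subset Finset.subset_union_left hωst⟩⟩

lemma mem_real_v_eq_zero (hv : v ∉ σ ∪ τ) {x : Fin n → ℝ}
    (hx : x ∈ realization (link (restrict Δ (σ ∪ τ)) σ)) : x v = 0 := by
  obtain ⟨ω, ⟨⟨_, hωs⟩, _, _⟩, _, hsupp, _⟩ := hx
  by_contra h
  exact hv (hωs (hsupp v h))

end Comb

noncomputable def qfun {n : ℕ} (v : Fin n) (x : Fin n → ℝ) : Fin n → ℝ :=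
  fun i => if i = v then 0 else x i / (1 - x v)

lemma qfun_mem {n : ℕ} (v : Fin n) (x : Fin n → ℝ) (G' : Set (Finset (Fin n)))
    (ω : Finset (Fin n)) (hω : ω.erase v ∈ G') (hpos : ∀ i, 0 ≤ x i)
    (hsupp : ∀ i, x i ≠ 0 → i ∈ ω) (hsum : ∑ i, x i = 1) (ht : x v < 1) :
    qfun v x ∈ realization G' := by
  have hd : (0:ℝ) < 1 - x v := by linarith
  refine ⟨ω.erase v, hω, ?_, ?_, ?_⟩
  · intro i
    unfold qfun
    split
    · exact le_refl 0
    · exact div_nonneg (hpos i) hd.le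
  · intro i hi
    unfold qfun at hi
    rw [Finset.mem_erase]
    split at hi
    · exact absurd rfl hi
    · refine ⟨by assumption, hsupp i fun h => hi (by rw [h, zero_div])⟩
  · have h1 : ∀ i, qfun v x i = (if i = v then 0 else x i) / (1 - x v) := by
      intro i; unfold qfun; split
      · rw [zero_div]
      · rfl
    simp only [h1, ← Finset.sum_div]
    rw [div_eq_one_iff_eq hd.ne']
    have h2 : ∀ i : Fin n, (if i = v then 0 else x i) = x i - (if i = v then x i else 0) := by
      intro i; split <;> simp
    simp only [h2]
    rw [Finset.sum_sub_distrib, hsum, Finset.sum_ite_eq' Finset.univ v x]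
    simp

lemma qfun_eq_self {n : ℕ} (v : Fin n) (x : Fin n → ℝ) (hx : x v = 0) : qfun v x = x := by
  funext i
  unfold qfun
  split
  · next h => rw [h, hx]
  · rw [hx, sub_zero, div_one]

lemma retract_contractible {Z Y : Type*} [TopologicalSpace Z] [TopologicalSpace Y]
    [ContractibleSpace Z] (f : C(Z, Y)) (g : C(Y, Z)) (h : ∀ y, f (g y) = y) :
    ContractibleSpace Y := by
  rw [contractible_iff_id_nullhomotopic]
  have hz : (ContinuousMap.id Z).Nullhomotopic := id_nullhomotopic Z
  have hcomp : (f.comp ((ContinuousMap.id Z).comp g)).Nullhomotopic :=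
    (hz.comp_left g).comp_right f
  have heq : f.comp ((ContinuousMap.id Z).comp g) = ContinuousMap.id Y := by
    ext y; simp [h y]
  rwa [heq] at hcomp

lemma glueOn2 {α β : Type*} [TopologicalSpace α] [TopologicalSpace β] {s t : Set α} {f : α → β}
    (hs : IsClosed s) (ht : IsClosed t) (hfs : ContinuousOn f s) (hft : ContinuousOn f t) :
    ContinuousOn f (s ∪ t) := by
  intro x hx
  apply ContinuousWithinAt.union
  · by_cases h : x ∈ s
    · exact hfs x h
    · exact continuousWithinAt_of_notMem_closure (by rwa [hs.closure_eq])
  · by_cases h : x ∈ t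
    · exact hft x h
    · exact continuousWithinAt_of_notMem_closure (by rwa [ht.closure_eq])

lemma glue2 {α β : Type*} [TopologicalSpace α] [TopologicalSpace β] {s t : Set α} {f : α → β}
    (hs : IsClosed s) (ht : IsClosed t) (hst : s ∪ t = Set.univ)
    (hfs : ContinuousOn f s) (hft : ContinuousOn f t) : Continuous f := by
  rw [← continuousOn_univ, ← hst]
  exact glueOn2 hs ht hfs hft

section FmapSec

variable {n : ℕ} (v : Fin n) (Γ' : Set (Finset (Fin n))) (Z : Set (Fin n → ℝ))
  (c : ↥(realization Γ'))
  (H : ContinuousMap.Homotopy (ContinuousMap.id ↥(realization Γ'))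
    (ContinuousMap.const ↥(realization Γ') c))
  (hq' : ∀ x ∈ Z, 1/3 ≤ x v → x v ≤ 2/3 → qfun v x ∈ realization Γ')

noncomputable def Fmap : ↥Z → (Fin n → ℝ) := fun x =>
  if h1 : x.1 v ≤ 1/3 then qfun v x.1
  else if h2 : x.1 v ≤ 2/3 then
    (H (Set.projIcc 0 1 zero_le_one (3 * x.1 v - 1),
        ⟨qfun v x.1, hq' x.1 x.2 (le_of_lt (not_le.1 h1)) h2⟩)).1
  else c.1

lemma Fmap_mem (R'' : Set (Fin n → ℝ)) (hA : ∀ x ∈ Z, x v ≤ 1/3 → qfun v x ∈ R'')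
    (hsub : realization Γ' ⊆ R'') : ∀ x, Fmap v Γ' Z c H hq' x ∈ R'' := by
  intro x
  unfold Fmap
  split_ifs with ha hb
  · exact hA x.1 x.2 ha
  · exact hsub (H _).2
  · exact hsub c.2

lemma Fmap_cont : Continuous (Fmap v Γ' Z c H hq') := by
  have hev : Continuous fun x : ↥Z => x.1 v :=
    (continuous_apply v).comp continuous_subtype_val
  apply glue2 (s := {x : ↥Z | x.1 v ≤ 1/3}) (t := {x : ↥Z | 1/3 ≤ x.1 v})
    (isClosed_le hev continuous_const) (isClosed_le continuous_const hev)
    (by ext x; simpa using le_total (x.1 v) (1/3))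
  · -- on the bottom piece, Fmap = qfun
    have hqc : ContinuousOn (fun x : ↥Z => qfun v x.1) {x : ↥Z | x.1 v ≤ 1/3} := by
      rw [continuousOn_iff_continuous_restrict]
      apply continuous_pi
      intro i
      by_cases hiv : i = v
      · simp only [Set.restrict_apply, qfun, if_pos hiv]
        exact continuous_const
      · simp only [Set.restrict_apply, qfun, if_neg hiv]
        apply Continuous.div
        · exact (continuous_apply i).comp (continuous_subtype_val.comp continuous_subtype_val)
        · exact continuous_const.sub
            ((continuous_apply v).comp (continuous_subtype_val.comp continuous_subtype_val))
        · intro y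
          have hy : y.1.1 v ≤ 1/3 := y.2
          intro h0
          have : y.1.1 v = 1 := by linarith
          linarith [this ▸ hy]
    apply hqc.congr
    intro x hx
    show Fmap v Γ' Z c H hq' x = qfun v x.1
    unfold Fmap
    exact dif_pos hx
  · -- on the top piece, split again
    have hBC : {x : ↥Z | 1/3 ≤ x.1 v} =
        {x : ↥Z | 1/3 ≤ x.1 v ∧ x.1 v ≤ 2/3} ∪ {x : ↥Z | 2/3 ≤ x.1 v} := by
      ext x
      simp only [Set.mem_setOf_eq, Set.mem_union]
      constructor
      · intro h
        rcases le_total (x.1 v) (2/3) with h' | h'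
        · exact Or.inl ⟨h, h'⟩
        · exact Or.inr h'
      · rintro (⟨h, _⟩ | h)
        · exact h
        · linarith
    rw [hBC]
    apply glueOn2
    · exact IsClosed.inter (isClosed_le continuous_const hev) (isClosed_le hev continuous_const)
    · exact isClosed_le continuous_const hev
    · -- middle piece
      rw [continuousOn_iff_continuous_restrict]
      have hrestr : ({x : ↥Z | 1/3 ≤ x.1 v ∧ x.1 v ≤ 2/3}).domRestrict (Fmap v Γ' Z c H hq') =
          fun y : ↥{x : ↥Z | 1/3 ≤ x.1 v ∧ x.1 v ≤ 2/3} =>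
            (H (Set.projIcc 0 1 zero_le_one (3 * y.1.1 v - 1),
              ⟨qfun v y.1.1, hq' y.1.1 y.1.2 y.2.1 y.2.2⟩)).1 := by
        funext y
        rcases eq_or_lt_of_le (y.2.1 : 1/3 ≤ y.1.1 v) with heq | hlt
        · simp only [Set.domRestrict_apply, Fmap]
          rw [dif_pos (le_of_eq heq.symm)]
          have hproj : Set.projIcc (0:ℝ) 1 zero_le_one (3 * y.1.1 v - 1) = 0 := by
            apply Subtype.ext
            rw [Set.coe_projIcc, ← heq]
            norm_num
          rw [hproj, H.apply_zero]
          rfl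
        · simp only [Set.domRestrict_apply, Fmap]
          rw [dif_neg (not_le.2 hlt), dif_pos y.2.2]
      rw [hrestr]
      apply continuous_subtype_val.comp
      apply (map_continuous H).comp
      apply Continuous.prodMk
      · apply continuous_projIcc.comp
        exact (continuous_const.mul ((continuous_apply v).comp
          (continuous_subtype_val.comp continuous_subtype_val))).sub continuous_const
      · apply Continuous.subtype_mk
        apply continuous_pi
        intro i
        by_cases hiv : i = v
        · simp only [qfun, if_pos hiv]
          exact continuous_const
        · simp only [qfun, if_neg hiv]
          apply Continuous.div
          · exact (continuous_apply i).comp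
              (continuous_subtype_val.comp continuous_subtype_val)
          · exact continuous_const.sub ((continuous_apply v).comp
              (continuous_subtype_val.comp continuous_subtype_val))
          · intro y
            have hy : y.1.1 v ≤ 2/3 := y.2.2
            intro h0
            have h1 : y.1.1 v = 1 := by linarith
            rw [h1] at hy
            linarith
    · -- top piece: constant
      apply ContinuousOn.congr (continuousOn_const (c := (c : Fin n → ℝ)))
      intro x hx
      show Fmap v Γ' Z c H hq' x = (c : Fin n → ℝ)
      have hx' : 2/3 ≤ x.1 v := hx
      unfold Fmap
      rw [dif_neg (by intro h; linarith)]
      rcases eq_or_lt_of_le hx' with heq | hlt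
      · rw [dif_pos (le_of_eq heq.symm)]
        have hproj : Set.projIcc (0:ℝ) 1 zero_le_one (3 * x.1 v - 1) = 1 := by
          apply Subtype.ext
          rw [Set.coe_projIcc, ← heq]
          norm_num
        rw [hproj, H.apply_one]
        rfl
      · rw [dif_neg (not_le.2 hlt)]

end FmapSec

theorem stmt11 {n : ℕ} (Δ : Set (Finset (Fin n))) (hΔ : IsSimplicialComplex Δ)
    (σ τ : Finset (Fin n)) (hσ : σ ∈ Δ) (hdisj : Disjoint σ τ)
    (v : Fin n) (hv : v ∉ σ ∪ τ)
    (h1 : ContractibleSpace ↥(realization (link (restrict Δ (insert v (σ ∪ τ))) σ)))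
    (h2 : insert v σ ∈ Δ →
      ContractibleSpace ↥(realization (link (restrict Δ (insert v (σ ∪ τ))) (insert v σ)))) :
    ContractibleSpace ↥(realization (link (restrict Δ (σ ∪ τ)) σ)) := by
  by_cases hins : insert v σ ∈ Δ
  · haveI := h2 hins
    haveI := h1
    obtain ⟨c, ⟨H⟩⟩ :=
      id_nullhomotopic ↥(realization (link (restrict Δ (insert v (σ ∪ τ))) (insert v σ)))
    have hq' : ∀ x ∈ realization (link (restrict Δ (insert v (σ ∪ τ))) σ),
        1/3 ≤ x v → x v ≤ 2/3 →
        qfun v x ∈ realization (link (restrict Δ (insert v (σ ∪ τ))) (insert v σ)) := by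
      rintro x ⟨ω, hω, hp, hs, hsum⟩ hl hu
      refine qfun_mem v x _ ω (L2 hΔ ω hω (hs v ?_)) hp hs hsum (by linarith)
      intro h0
      rw [h0] at hl
      norm_num at hl
    have hA : ∀ x ∈ realization (link (restrict Δ (insert v (σ ∪ τ))) σ),
        x v ≤ 1/3 → qfun v x ∈ realization (link (restrict Δ (σ ∪ τ)) σ) := by
      rintro x ⟨ω, hω, hp, hs, hsum⟩ h
      exact qfun_mem v x _ ω (L1 hΔ ω hω) hp hs hsum (by linarith)
    have hsub : realization (link (restrict Δ (insert v (σ ∪ τ))) (insert v σ)) ⊆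
        realization (link (restrict Δ (σ ∪ τ)) σ) := realization_mono (L3 hΔ)
    refine retract_contractible
      (Z := ↥(realization (link (restrict Δ (insert v (σ ∪ τ))) σ)))
      ⟨fun x => ⟨Fmap v _ _ c H hq' x, Fmap_mem v _ _ c H hq' _ hA hsub x⟩,
        (Fmap_cont v _ _ c H hq').subtype_mk _⟩
      ⟨Set.inclusion (realization_mono L4), continuous_inclusion _⟩ ?_
    intro y
    apply Subtype.ext
    show Fmap v _ _ c H hq' (Set.inclusion (realization_mono L4) y) = y.1
    have hy0 : y.1 v = 0 := mem_real_v_eq_zero hv y.2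
    have hcoe : (Set.inclusion (realization_mono (L4 (v := v))) y).1 = y.1 := rfl
    unfold Fmap
    rw [dif_pos (by rw [hcoe, hy0]; norm_num)]
    rw [hcoe]
    exact qfun_eq_self v y.1 hy0
  · rw [← L5 hΔ hins]
    exact h1
end

section
/- Let Δ be a finite simplicial complex and σ ∈ Δ nonempty such that σ is not an intersection of facets of Δ (σ ≠ f_σ). Then the geometric realization of Lk_σ(Δ) is contractible. -/
theorem stmt13 {n : ℕ} (Δ : Set (Finset (Fin n))) (hΔ : IsSimplicialComplex Δ)
    (σ : Finset (Fin n)) (hσ : σ ∈ Δ) (hne : σ.Nonempty)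
    (hnotint : (↑σ : Set (Fin n)) ≠ facetInt Δ σ) :
    ContractibleSpace ↥(realization (link Δ σ)) := by
  have hsub : (↑σ : Set (Fin n)) ⊆ facetInt Δ σ := fun i hi ρ _ hσρ => hσρ hi
  obtain ⟨v, hvf, hvσ⟩ : ∃ v, v ∈ facetInt Δ σ ∧ v ∉ σ := by
    by_contra h
    push_neg at h
    exact hnotint (hsub.antisymm fun i hi => by by_contra hiσ; exact hiσ (h i hi))
  set e : Fin n → ℝ := fun i => if i = v then 1 else 0 with he
  have hesum : (∑ i, e i) = 1 := by simp [he]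
  have hlinkv : ∀ ω ∈ link Δ σ, ω ∪ {v} ∈ link Δ σ := by
    rintro ω ⟨hω, hdisj, hunion⟩
    obtain ⟨ρ, hρ, hsubρ⟩ := exists_facet Δ (σ ∪ ω) hunion
    have hvρ : v ∈ ρ := hvf ρ hρ (Finset.union_subset_left hsubρ)
    have h1 : σ ∪ (ω ∪ {v}) ∈ Δ := hΔ ρ hρ.1 _ (by
      intro i hi
      simp only [Finset.mem_union, Finset.mem_singleton] at hi
      rcases hi with h | h | h
      · exact hsubρ (Finset.mem_union_left _ h)
      · exact hsubρ (Finset.mem_union_right _ h)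
      · exact h ▸ hvρ)
    refine ⟨hΔ _ h1 _ Finset.subset_union_right, ?_, h1⟩
    rw [Finset.disjoint_union_right]
    exact ⟨hdisj, by simpa using hvσ⟩
  have hvlink : ({v} : Finset (Fin n)) ∈ link Δ σ := by
    have : (∅ : Finset (Fin n)) ∈ link Δ σ := by
      refine ⟨hΔ σ hσ ∅ (Finset.empty_subset _), Finset.disjoint_empty_right _, by simpa using hσ⟩
    simpa using hlinkv ∅ this
  have hemem : e ∈ realization (link Δ σ) := by
    refine ⟨{v}, hvlink, fun i => ?_, fun i hi => ?_, hesum⟩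
    · by_cases h : i = v <;> simp [he, h]
    · by_cases h : i = v
      · simp [h]
      · simp [he, h] at hi
  have hstar : StarConvex ℝ e (realization (link Δ σ)) := by
    rintro y ⟨ω, hω, hy0, hysupp, hysum⟩ a b ha hb hab
    refine ⟨ω ∪ {v}, hlinkv ω hω, fun i => ?_, fun i hi => ?_, ?_⟩
    · exact add_nonneg (smul_nonneg ha (by by_cases h : i = v <;> simp [he, h]))
        (smul_nonneg hb (hy0 i))
    · by_cases h : i = v
      · simp [h]
      · simp only [Pi.add_apply, Pi.smul_apply, he, if_neg h, smul_eq_mul, mul_zero,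
          zero_add] at hi
        exact Finset.mem_union_left _ (hysupp i (by
          intro h0; exact hi (by rw [h0, mul_zero])))
    · simp only [Pi.add_apply, Pi.smul_apply, smul_eq_mul]
      rw [Finset.sum_add_distrib, ← Finset.mul_sum, ← Finset.mul_sum, hesum, hysum,
        mul_one, mul_one, hab]
  exact hstar.contractibleSpace ⟨e, hemem⟩
end
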